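/- Let T be a finite tree on vertex set V, let c : V × V → ℝ≥0 be a cost function that is monotone non-decreasing with respect to the target, and let x : V × V → [0,1] be a function satisfying, for every pair v, w ∈ V, Σ_{u ∈ P(v,w)} min(x(u,v), x(u,w)) ≥ 1. Then there exists a query assignment Q : V → (finite subsets of V) such that for every v ∈ V, Σ_{q ∈ Q(v)} c(q,v) ≤ 2 · Σ_{u ∈ V} c(u,v) · x(u,v). In particular, for any weights w : V → ℝ≥0 the weighted average cost Σ_v w(v)·Σ_{q∈Q(v)} c(q,v) is at most 2·Σ_v w(v)·Σ_u c(u,v)·x(u,v), and the worst-case cost max_v Σ_{q∈Q(v)} c(q,v) is at most 2·max_v Σ_u c(u,v)·x(u,v). -/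

import Mathlib

open scoped Classical

/-- The vertex set of the unique path between `u` and `v` in a tree `G`
(stated via existence of a path containing the vertex, which in a tree is
the unique path). -/
def pathSet {V : Type*} (G : SimpleGraph V) (u v : V) : Set V :=
  {x | ∃ p : G.Path u v, x ∈ (p : G.Walk u v).support}

/-- A query assignment: (i) for all `u, v`, `Q(u) ∩ Q(v) ∩ P(u,v) ≠ ∅`, and
(ii) for every nonempty subset `U` inducing a connected subgraph, the sets
`Q(v)`, `v ∈ U`, have a common element. -/
def IsQueryAssignment {V : Type*} (G : SimpleGraph V) (Q : V → Finset V) : Prop :=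
  (∀ u v : V, ∃ q : V, q ∈ Q u ∧ q ∈ Q v ∧ q ∈ pathSet G u v) ∧
  (∀ U : Set V, U.Nonempty → (G.induce U).Connected →
    ∃ r : V, ∀ v ∈ U, r ∈ Q v)

/-!
Call `r ∈ C` a fractional centroid of a subtree `C` if, for every target `v ∈ C`, the vertices
`q ∈ C` that `r` separates from `v` (including `r`) carry `x(·, v)`-mass at least `1/2`.
Feasibility of `x` forces a centroid to exist: otherwise, following from each `r` the edge towards
a target for which `r` fails gives a map to neighbours, which in a finite tree has a 2-cycle
`r₁ ⇄ r₂`; the two light sides then cover the path between the two targets, contradicting the LP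
constraint for that pair. Querying the centroid and recursing into the branch containing the
target costs, by monotonicity, `c(r, v) ≤ 2 Σ c(q, v) x(q, v)` over the separated part, and these
parts are disjoint along the recursion. Two targets `u, v` follow the same branches until the
first centroid on the path between them, which both then query.
-/

namespace SimpleGraph

open Finset

variable {V : Type*} {G : SimpleGraph V} {C : Finset V} {a b c u v q z : V}

theorem pathSet_symm (u v : V) : pathSet G u v = pathSet G v u := by
  ext z
  exact ⟨fun ⟨p, hp⟩ => ⟨p.reverse, by simpa using hp⟩,
    fun ⟨p, hp⟩ => ⟨p.reverse, by simpa using hp⟩⟩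

theorem pathSet_self (u : V) : pathSet G u u = {u} := by
  ext z
  constructor
  · rintro ⟨p, hp⟩
    simpa [Path.loop_eq p] using hp
  · rintro rfl
    exact ⟨Path.nil, by simp⟩

theorem IsAcyclic.mem_pathSet_iff (hA : G.IsAcyclic) (p : G.Path u v) :
    z ∈ pathSet G u v ↔ z ∈ (p : G.Walk u v).support :=
  ⟨fun ⟨p', hp'⟩ => (hA.subsingleton_path u v).elim p' p ▸ hp', fun h => ⟨p, h⟩⟩

theorem IsAcyclic.pathSet_eq_of_adj (hA : G.IsAcyclic) (h : G.Adj a b) :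
    pathSet G a b = {a, b} := by
  ext z
  rw [hA.mem_pathSet_iff (Path.singleton h)]
  simp

theorem IsTree.left_mem_pathSet (hT : G.IsTree) (u v : V) : u ∈ pathSet G u v :=
  let ⟨p, hp⟩ := (hT.connected u v).exists_isPath
  ⟨⟨p, hp⟩, p.start_mem_support⟩

theorem IsTree.right_mem_pathSet (hT : G.IsTree) (u v : V) : v ∈ pathSet G u v :=
  let ⟨p, hp⟩ := (hT.connected u v).exists_isPath
  ⟨⟨p, hp⟩, p.end_mem_support⟩

theorem IsTree.pathSet_subset_union (hT : G.IsTree) (u v w : V) :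
    pathSet G u w ⊆ pathSet G u v ∪ pathSet G v w := by
  obtain ⟨p, hp⟩ := (hT.connected u v).exists_isPath
  obtain ⟨p', hp'⟩ := (hT.connected v w).exists_isPath
  intro z hz
  rw [hT.isAcyclic.mem_pathSet_iff ⟨_, (p.append p').bypass_isPath⟩] at hz
  rcases (p.mem_support_append_iff p').1 (Walk.support_bypass_subset_support _ hz) with h | h
  · exact Or.inl ⟨⟨p, hp⟩, h⟩
  · exact Or.inr ⟨⟨p', hp'⟩, h⟩

theorem IsAcyclic.pathSet_subset_of_mem (hA : G.IsAcyclic) (h : q ∈ pathSet G u v) :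
    pathSet G u q ⊆ pathSet G u v := by
  obtain ⟨p, hq⟩ := h
  intro z hz
  rw [hA.mem_pathSet_iff ⟨_, p.2.takeUntil hq⟩] at hz
  exact ⟨p, Walk.support_takeUntil_subset_support _ hq hz⟩

theorem IsAcyclic.eq_of_mem_pathSet_of_mem_pathSet (hA : G.IsAcyclic)
    (hm : q ∈ pathSet G u v) (hu : u ∈ pathSet G q v) : u = q := by
  rw [pathSet_symm] at hm hu
  obtain ⟨p, hq⟩ := hm
  by_contra hne
  rw [hA.mem_pathSet_iff ⟨_, p.2.takeUntil hq⟩] at hu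
  exact Walk.endpoint_notMem_support_takeUntil p.2 hq hne hu

theorem IsTree.mem_pathSet_or_mem_pathSet_of_adj (hT : G.IsTree) (h : G.Adj a b) (q : V) :
    a ∈ pathSet G b q ∨ b ∈ pathSet G a q := by
  obtain ⟨p, hp⟩ := (hT.connected a q).exists_isPath
  by_cases hb : b ∈ p.support
  · exact Or.inr ⟨⟨p, hp⟩, hb⟩
  · exact Or.inl ⟨⟨.cons h.symm p, hp.cons hb⟩, by simp⟩

theorem IsTree.mem_pathSet_of_adj_of_adj (hT : G.IsTree) (hab : G.Adj a b) (hbc : G.Adj b c)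
    (hac : a ≠ c) : b ∈ pathSet G a c := by
  rcases hT.mem_pathSet_or_mem_pathSet_of_adj hbc a with h | h
  · rwa [pathSet_symm]
  · rw [hT.isAcyclic.pathSet_eq_of_adj hab.symm] at h
    rcases h with h | h
    · exact absurd h hbc.ne'
    · exact absurd h.symm hac

theorem IsTree.mem_pathSet_of_adj_of_mem_pathSet (hT : G.IsTree) (h : G.Adj a b)
    (hv : b ∈ pathSet G a v) (hq : a ∈ pathSet G b q) : a ∈ pathSet G v q := by
  rcases hT.pathSet_subset_union b v q hq with h' | h'
  · exact absurd (hT.isAcyclic.eq_of_mem_pathSet_of_mem_pathSet hv h') h.ne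
  · exact h'

theorem IsTree.exists_adj_mem_pathSet (hT : G.IsTree) (hne : u ≠ v) :
    ∃ n, G.Adj u n ∧ n ∈ pathSet G u v := by
  obtain ⟨p, hp⟩ := (hT.connected u v).exists_isPath
  exact ⟨_, Walk.adj_snd (Walk.not_nil_of_ne hne), ⟨p, hp⟩, Walk.getVert_mem_support _ _⟩

theorem IsTree.mem_pathSet_of_mem_pathSet_of_adj_of_adj (hT : G.IsTree) (hab : G.Adj a b)
    (hbc : G.Adj b c) (hac : a ≠ c) (ha : a ∈ pathSet G b q) : b ∈ pathSet G c q := by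
  have haq : a ∈ pathSet G c q := by
    rcases hT.pathSet_subset_union b c q ha with h | h
    · rw [hT.isAcyclic.pathSet_eq_of_adj hbc] at h
      rcases h with h | h
      · exact absurd h hab.ne
      · exact absurd h hac
    · exact h
  exact hT.isAcyclic.pathSet_subset_of_mem haq
    (hT.mem_pathSet_of_adj_of_adj hbc.symm hab.symm hac.symm)

theorem IsTree.exists_apply_apply_eq_of_adj (hT : G.IsTree) (hne : C.Nonempty) {f : V → V}
    (hfC : ∀ r ∈ C, f r ∈ C) (hf : ∀ r ∈ C, G.Adj r (f r)) : ∃ r ∈ C, f (f r) = r := by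
  -- Unless `f (f r) = r`, the side of the edge `r f(r)` containing `f r` strictly shrinks
  -- when passing from `r` to `f r`.
  obtain ⟨r, hr, hmin⟩ := C.exists_min_image (fun r => #{q ∈ C | r ∉ pathSet G (f r) q}) hne
  refine ⟨r, hr, ?_⟩
  by_contra hfr
  have hsub : {q ∈ C | f r ∉ pathSet G (f (f r)) q} ⊆
      {q ∈ C | r ∉ pathSet G (f r) q}.erase (f r) := by
    intro q hq
    rw [mem_filter] at hq
    refine mem_erase.2 ⟨?_, mem_filter.2 ⟨hq.1, fun h => hq.2 ?_⟩⟩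
    · rintro rfl
      exact hq.2 (hT.right_mem_pathSet _ _)
    · exact hT.mem_pathSet_of_mem_pathSet_of_adj_of_adj (hf r hr) (hf _ (hfC r hr))
        (Ne.symm hfr) h
  have hfr_mem : f r ∈ {q ∈ C | r ∉ pathSet G (f r) q} := by
    refine mem_filter.2 ⟨hfC r hr, fun h => (hf r hr).ne ?_⟩
    rwa [pathSet_self, Set.mem_singleton_iff] at h
  have := hmin (f r) (hfC r hr)
  have := card_le_card hsub
  have := card_erase_lt_of_mem hfr_mem
  omega

end SimpleGraph

theorem Finset.sum_insert_le_add {ι M : Type*} [DecidableEq ι] [AddCommMonoid M]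
    [PartialOrder M] [IsOrderedAddMonoid M] {f : ι → M} {s : Finset ι} {a : ι} (ha : 0 ≤ f a) :
    ∑ i ∈ insert a s, f i ≤ f a + ∑ i ∈ s, f i := by
  by_cases has : a ∈ s
  · rw [Finset.insert_eq_of_mem has]
    exact le_add_of_nonneg_left ha
  · rw [Finset.sum_insert has]

section QueryStrategy

open Finset SimpleGraph

variable {V : Type*} {G : SimpleGraph V} {C : Finset V} {a b r u v w q : V}

def IsPathConvex (G : SimpleGraph V) (C : Finset V) : Prop :=
  ∀ ⦃u⦄, u ∈ C → ∀ ⦃w⦄, w ∈ C → pathSet G u w ⊆ C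

theorem isPathConvex_univ [Fintype V] : IsPathConvex G univ := fun _ _ _ _ _ _ => mem_univ _

noncomputable def farSide (G : SimpleGraph V) (C : Finset V) (r v : V) : Finset V :=
  {q ∈ C | r ∈ pathSet G v q}

noncomputable def branch (G : SimpleGraph V) (C : Finset V) (r v : V) : Finset V :=
  {q ∈ C.erase r | r ∉ pathSet G v q}

theorem mem_farSide : q ∈ farSide G C r v ↔ q ∈ C ∧ r ∈ pathSet G v q := mem_filter

theorem mem_branch : q ∈ branch G C r v ↔ (q ≠ r ∧ q ∈ C) ∧ r ∉ pathSet G v q := by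
  rw [branch, mem_filter, mem_erase]

theorem card_branch_lt (hr : r ∈ C) : #(branch G C r v) < #C :=
  (card_le_card (filter_subset _ _)).trans_lt (card_erase_lt_of_mem hr)

theorem mem_branch_self (hv : v ∈ C) (hvr : v ≠ r) : v ∈ branch G C r v := by
  refine mem_filter.2 ⟨mem_erase.2 ⟨hvr, hv⟩, ?_⟩
  rw [pathSet_self, Set.mem_singleton_iff]
  exact hvr.symm

theorem sum_farSide_add_sum_branch_le {f : V → ℝ} (hf : ∀ q, 0 ≤ f q) :
    ∑ q ∈ farSide G C r v, f q + ∑ q ∈ branch G C r v, f q ≤ ∑ q ∈ C, f q := by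
  rw [← sum_filter_add_sum_filter_not C (fun q => r ∈ pathSet G v q) f]
  exact add_le_add le_rfl (sum_le_sum_of_subset_of_nonneg
    (filter_subset_filter _ (erase_subset r C)) fun q _ _ => hf q)

theorem branch_eq_branch_of_not_mem_pathSet (hT : G.IsTree) (h : r ∉ pathSet G u v) :
    branch G C r u = branch G C r v := by
  have key : ∀ {u v}, r ∉ pathSet G u v → ∀ q, r ∈ pathSet G u q → r ∈ pathSet G v q :=
    fun {u v} h q hq => (hT.pathSet_subset_union u v q hq).resolve_left h
  ext q
  simp only [branch, mem_filter]
  exact and_congr_right fun _ =>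
    not_congr ⟨key h q, key (by rwa [pathSet_symm]) q⟩

theorem IsPathConvex.branch (hT : G.IsTree) (hC : IsPathConvex G C) (r v : V) :
    IsPathConvex G (branch G C r v) := by
  intro u hu w hw z hz
  simp only [mem_coe, mem_branch] at hu hw ⊢
  have hrz : r ∉ pathSet G v z := fun h => by
    rcases hT.pathSet_subset_union v u z h with h | h
    · exact hu.2 h
    rcases hT.pathSet_subset_union u v w (hT.isAcyclic.pathSet_subset_of_mem hz h) with h | h
    · exact hu.2 (by rwa [pathSet_symm] at h)
    · exact hw.2 h
  refine ⟨⟨fun hzr => hrz (hzr ▸ hT.right_mem_pathSet v z), hC hu.1.2 hw.1.2 hz⟩, hrz⟩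

def IsFracCentroid (G : SimpleGraph V) (x : V → V → ℝ) (C : Finset V) (r : V) : Prop :=
  r ∈ C ∧ ∀ v ∈ C, 1 / 2 ≤ ∑ q ∈ farSide G C r v, x q v

theorem IsFracCentroid.le_two_mul_sum_farSide {x c : V → V → ℝ} (hr : IsFracCentroid G x C r)
    (hv : v ∈ C) (hc0 : ∀ u v, 0 ≤ c u v)
    (hmono : ∀ u v t : V, u ∈ pathSet G v t → c u t ≤ c v t) (hx0 : ∀ u v, 0 ≤ x u v) :
    c r v ≤ 2 * ∑ q ∈ farSide G C r v, c q v * x q v :=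
  calc c r v = 2 * (c r v * (1 / 2)) := by ring
    _ ≤ 2 * (c r v * ∑ q ∈ farSide G C r v, x q v) := by gcongr; exacts [hc0 r v, hr.2 v hv]
    _ = 2 * ∑ q ∈ farSide G C r v, c r v * x q v := by rw [mul_sum]
    _ ≤ 2 * ∑ q ∈ farSide G C r v, c q v * x q v := by
        gcongr with q hq
        · exact hx0 q v
        · exact hmono r q v (by rw [pathSet_symm]; exact (mem_farSide.1 hq).2)

section Feasible

variable [Fintype V] {x : V → V → ℝ}

def LPFeasible (G : SimpleGraph V) (x : V → V → ℝ) : Prop :=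
  ∀ v w : V, 1 ≤ ∑ u ∈ Finset.univ.filter (· ∈ pathSet G v w), min (x u v) (x u w)

theorem LPFeasible.one_le_self (hx : LPFeasible G x) (v : V) : 1 ≤ x v v := by
  simpa [pathSet_self, sum_filter] using hx v v

theorem LPFeasible.one_le_sum_farSide_add (hT : G.IsTree) (hx0 : ∀ u v, 0 ≤ x u v)
    (hx : LPFeasible G x) (hC : IsPathConvex G C) (hab : G.Adj a b) (hv : v ∈ C) (hw : w ∈ C)
    (hbv : b ∈ pathSet G a v) (haw : a ∈ pathSet G b w) :
    1 ≤ ∑ q ∈ farSide G C a v, x q v + ∑ q ∈ farSide G C b w, x q w := by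
  have hcover : ∀ q, a ∈ pathSet G v q ∨ b ∈ pathSet G w q := fun q =>
    (hT.mem_pathSet_or_mem_pathSet_of_adj hab q).imp
      (hT.mem_pathSet_of_adj_of_mem_pathSet hab hbv)
      (hT.mem_pathSet_of_adj_of_mem_pathSet hab.symm haw)
  let g : V → ℝ := fun q =>
    (if a ∈ pathSet G v q then x q v else 0) + (if b ∈ pathSet G w q then x q w else 0)
  have hg : ∀ q, 0 ≤ g q := fun q => by
    have := hx0 q v
    have := hx0 q w
    simp only [g]
    split_ifs <;> linarith
  have hmin : ∀ q, min (x q v) (x q w) ≤ g q := fun q => by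
    have := hx0 q v
    have := hx0 q w
    rcases hcover q with h | h <;> simp only [g, h, if_true] <;> split_ifs <;>
      linarith [min_le_left (x q v) (x q w), min_le_right (x q v) (x q w)]
  calc 1 ≤ ∑ q ∈ univ.filter (· ∈ pathSet G v w), min (x q v) (x q w) := hx v w
    _ ≤ ∑ q ∈ univ.filter (· ∈ pathSet G v w), g q := sum_le_sum fun q _ => hmin q
    _ ≤ ∑ q ∈ C, g q :=
        sum_le_sum_of_subset_of_nonneg (fun q hq => hC hv hw (mem_filter.1 hq).2)
          fun q _ _ => hg q
    _ = ∑ q ∈ farSide G C a v, x q v + ∑ q ∈ farSide G C b w, x q w := by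
        rw [sum_add_distrib, farSide, farSide, sum_filter, sum_filter]

theorem LPFeasible.exists_isFracCentroid (hT : G.IsTree) (hx0 : ∀ u v, 0 ≤ x u v)
    (hx : LPFeasible G x) (hC : IsPathConvex G C) (hne : C.Nonempty) :
    ∃ r, IsFracCentroid G x C r := by
  by_contra! hnone
  have hlight : ∀ r ∈ C, ∃ v ∈ C, v ≠ r ∧ ∑ q ∈ farSide G C r v, x q v < 1 / 2 := by
    intro r hr
    obtain ⟨v, hv, hlt⟩ : ∃ v ∈ C, ∑ q ∈ farSide G C r v, x q v < 1 / 2 := by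
      simpa [IsFracCentroid, hr] using hnone r
    refine ⟨v, hv, ?_, hlt⟩
    rintro rfl
    have hvv : v ∈ farSide G C v v := mem_farSide.2 ⟨hv, hT.left_mem_pathSet v v⟩
    have := single_le_sum (fun q _ => hx0 q v) hvv
    linarith [hx.one_le_self v]
  choose! v hvC hvr hv using hlight
  have hstep : ∀ r ∈ C, ∃ n ∈ C, G.Adj r n ∧ n ∈ pathSet G r (v r) := fun r hr =>
    let ⟨n, hn, hnv⟩ := hT.exists_adj_mem_pathSet (hvr r hr).symm
    ⟨n, hC hr (hvC r hr) hnv, hn, hnv⟩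
  choose! f hfC hf hfv using hstep
  obtain ⟨r, hr, hffr⟩ := hT.exists_apply_apply_eq_of_adj hne hfC hf
  have := hx.one_le_sum_farSide_add hT hx0 hC (hf r hr) (hvC r hr) (hvC _ (hfC r hr))
    (hfv r hr) (by simpa only [hffr] using hfv _ (hfC r hr))
  linarith [hv r hr, hv _ (hfC r hr)]

end Feasible

section Strategy

variable [Nonempty V] {x : V → V → ℝ}

noncomputable def fracCentroid (G : SimpleGraph V) (x : V → V → ℝ) (C : Finset V) : V :=
  Classical.epsilon (IsFracCentroid G x C)

noncomputable def queries (G : SimpleGraph V) (x : V → V → ℝ) (C : Finset V) (v : V) :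
    Finset V :=
  if _ : fracCentroid G x C ∈ C ∧ v ≠ fracCentroid G x C then
    insert (fracCentroid G x C) (queries G x (branch G C (fracCentroid G x C) v) v)
  else {v}
termination_by #C
decreasing_by exact card_branch_lt ‹_ ∧ _›.1

theorem queries_of_ne (hr : fracCentroid G x C ∈ C) (hv : v ≠ fracCentroid G x C) :
    queries G x C v =
      insert (fracCentroid G x C) (queries G x (branch G C (fracCentroid G x C) v) v) := by
  rw [queries, dif_pos ⟨hr, hv⟩]

theorem queries_of_eq (hv : v = fracCentroid G x C) : queries G x C v = {v} := by
  rw [queries, dif_neg (fun h => h.2 hv)]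

theorem fracCentroid_mem_queries (hr : fracCentroid G x C ∈ C) (v : V) :
    fracCentroid G x C ∈ queries G x C v := by
  by_cases hv : v = fracCentroid G x C
  · rw [queries_of_eq hv, hv, mem_singleton]
  · rw [queries_of_ne hr hv]
    exact mem_insert_self _ _

variable [Fintype V]

theorem LPFeasible.isFracCentroid_fracCentroid (hT : G.IsTree) (hx0 : ∀ u v, 0 ≤ x u v)
    (hx : LPFeasible G x) (hC : IsPathConvex G C) (hne : C.Nonempty) :
    IsFracCentroid G x C (fracCentroid G x C) :=
  Classical.epsilon_spec (hx.exists_isFracCentroid hT hx0 hC hne)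

theorem LPFeasible.exists_mem_queries_inter (hT : G.IsTree) (hx0 : ∀ u v, 0 ≤ x u v)
    (hx : LPFeasible G x) {C : Finset V} (hC : IsPathConvex G C) {u v : V} (hu : u ∈ C)
    (hv : v ∈ C) :
    ∃ q ∈ queries G x C u, q ∈ queries G x C v ∧ q ∈ pathSet G u v := by
  have hr := (hx.isFracCentroid_fracCentroid hT hx0 hC ⟨u, hu⟩).1
  set r := fracCentroid G x C
  by_cases hruv : r ∈ pathSet G u v
  · exact ⟨r, fracCentroid_mem_queries hr u, fracCentroid_mem_queries hr v, hruv⟩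
  have hur : u ≠ r := fun h => hruv (h ▸ hT.left_mem_pathSet u v)
  have hvr : v ≠ r := fun h => hruv (h ▸ hT.right_mem_pathSet u v)
  have hbranch := branch_eq_branch_of_not_mem_pathSet (C := C) hT hruv
  obtain ⟨q, hqu, hqv, hq⟩ := hx.exists_mem_queries_inter hT hx0 (hC.branch hT r v)
    (hbranch ▸ mem_branch_self hu hur) (mem_branch_self hv hvr)
  rw [queries_of_ne hr hur, queries_of_ne hr hvr, hbranch]
  exact ⟨q, mem_insert_of_mem hqu, mem_insert_of_mem hqv, hq⟩
termination_by #C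
decreasing_by exact card_branch_lt hr

theorem LPFeasible.sum_queries_le {c : V → V → ℝ} (hT : G.IsTree) (hc0 : ∀ u v, 0 ≤ c u v)
    (hmono : ∀ u v t : V, u ∈ pathSet G v t → c u t ≤ c v t) (hx0 : ∀ u v, 0 ≤ x u v)
    (hx : LPFeasible G x) {C : Finset V} (hC : IsPathConvex G C) {v : V} (hv : v ∈ C) :
    ∑ q ∈ queries G x C v, c q v ≤ 2 * ∑ q ∈ C, c q v * x q v := by
  have hr := hx.isFracCentroid_fracCentroid hT hx0 hC ⟨v, hv⟩
  set r := fracCentroid G x C with hr_def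
  have hfar := hr.le_two_mul_sum_farSide hv hc0 hmono hx0
  have hsplit := sum_farSide_add_sum_branch_le (G := G) (C := C) (r := r) (v := v)
    (fun q => mul_nonneg (hc0 q v) (hx0 q v))
  by_cases hvr : v = r
  · have := sum_nonneg fun q (_ : q ∈ branch G C r v) => mul_nonneg (hc0 q v) (hx0 q v)
    rw [queries_of_eq hvr, sum_singleton]
    nth_rewrite 1 [hvr]
    linarith
  · have ih := hx.sum_queries_le hT hc0 hmono hx0 (hC.branch hT r v) (mem_branch_self hv hvr)
    have hins : ∑ q ∈ insert r (queries G x (branch G C r v) v), c q v ≤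
        c r v + ∑ q ∈ queries G x (branch G C r v) v, c q v := sum_insert_le_add (hc0 r v)
    rw [queries_of_ne hr.1 hvr, ← hr_def]
    linarith
termination_by #C
decreasing_by exact card_branch_lt hr.1

end Strategy

end QueryStrategy

theorem stmt_15_general {V : Type*} [Fintype V] [Nonempty V]
    (G : SimpleGraph V) (hT : G.IsTree)
    (c : V → V → ℝ) (hc0 : ∀ u v, 0 ≤ c u v)
    (hmono : ∀ u v t : V, u ∈ pathSet G v t → c u t ≤ c v t)
    (x : V → V → ℝ) (hx0 : ∀ u v, 0 ≤ x u v)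
    (hfeas : ∀ v w : V,
      1 ≤ ∑ u ∈ Finset.univ.filter (· ∈ pathSet G v w), min (x u v) (x u w)) :
    ∃ Q : V → Finset V, IsQueryAssignment G Q ∧
      (∀ v : V, (∑ q ∈ Q v, c q v) ≤ 2 * ∑ u : V, c u v * x u v) ∧
      (∀ w : V → ℝ, (∀ v, 0 ≤ w v) →
        (∑ v : V, w v * ∑ q ∈ Q v, c q v) ≤
          2 * ∑ v : V, w v * ∑ u : V, c u v * x u v) ∧
      (Finset.univ.sup' Finset.univ_nonempty (fun v => ∑ q ∈ Q v, c q v) ≤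
        2 * Finset.univ.sup' Finset.univ_nonempty
          (fun v => ∑ u : V, c u v * x u v)) := by
  have hx : LPFeasible G x := hfeas
  have hcost (v : V) : ∑ q ∈ queries G x Finset.univ v, c q v ≤ 2 * ∑ u, c u v * x u v :=
    hx.sum_queries_le hT hc0 hmono hx0 isPathConvex_univ (Finset.mem_univ v)
  refine ⟨queries G x Finset.univ, ⟨fun u v => ?_, fun U _ _ => ?_⟩, hcost, fun w hw => ?_, ?_⟩
  · exact hx.exists_mem_queries_inter hT hx0 isPathConvex_univ (Finset.mem_univ u)
      (Finset.mem_univ v)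
  · exact ⟨fracCentroid G x Finset.univ, fun v _ =>
      fracCentroid_mem_queries (Finset.mem_univ _) v⟩
  · calc ∑ v, w v * ∑ q ∈ queries G x Finset.univ v, c q v
        ≤ ∑ v, w v * (2 * ∑ u, c u v * x u v) := by gcongr with v; exacts [hw v, hcost v]
      _ = 2 * ∑ v, w v * ∑ u, c u v * x u v := by rw [Finset.mul_sum]; congr 1 with v; ring
  · refine Finset.sup'_le _ _ fun v _ => (hcost v).trans ?_
    gcongr
    exact Finset.le_sup' (fun v => ∑ u, c u v * x u v) (Finset.mem_univ v)

/-- Given a finite tree, a cost function monotone non-decreasing with respect to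
the target, and a feasible fractional LP solution `x`, there exists a query
assignment `Q` with `Σ_{q ∈ Q(v)} c(q,v) ≤ 2·Σ_u c(u,v)·x(u,v)` for every `v`;
in particular the weighted average-case cost and the worst-case cost of `Q` are
within a factor `2` of the corresponding LP objectives. -/
theorem stmt_15 {V : Type*} [Fintype V] [Nonempty V]
    (G : SimpleGraph V) (hT : G.IsTree)
    (c : V → V → ℝ) (hc0 : ∀ u v, 0 ≤ c u v)
    (hmono : ∀ u v t : V, u ∈ pathSet G v t → c u t ≤ c v t)
    (x : V → V → ℝ) (hx0 : ∀ u v, 0 ≤ x u v) (hx1 : ∀ u v, x u v ≤ 1)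
    (hfeas : ∀ v w : V,
      1 ≤ ∑ u ∈ Finset.univ.filter (· ∈ pathSet G v w), min (x u v) (x u w)) :
    ∃ Q : V → Finset V, IsQueryAssignment G Q ∧
      (∀ v : V, (∑ q ∈ Q v, c q v) ≤ 2 * ∑ u : V, c u v * x u v) ∧
      (∀ w : V → ℝ, (∀ v, 0 ≤ w v) →
        (∑ v : V, w v * ∑ q ∈ Q v, c q v) ≤
          2 * ∑ v : V, w v * ∑ u : V, c u v * x u v) ∧
      (Finset.univ.sup' Finset.univ_nonempty (fun v => ∑ q ∈ Q v, c q v) ≤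
        2 * Finset.univ.sup' Finset.univ_nonempty
          (fun v => ∑ u : V, c u v * x u v)) :=
  stmt_15_general G hT c hc0 hmono x hx0 hfeas
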